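/- Let λ be a vector in R^{S×A} with nonnegative entries satisfying λ_{sa} ≥ 0 and, for each state s, Σ_a λ_{sa} ≥ ξ_s > 0. Define Π(λ)_{sa} = λ_{sa} / Σ_{a'} λ_{sa'}. Then for any two such vectors λ, λ', we have ‖Π(λ) − Π(λ')‖₂ ≤ (2 / min_s ξ_s) · ‖λ − λ'‖₁. -/

import Mathlib

/-!
Row by row, with `R = ∑ x` and `R' = ∑ y`, split
`x / R - y / R' = (x - y) / R + (y / R') * (R' - R) / R`.
Since `y ≥ 0`, `y / R'` has total mass one, so both terms have `ℓ¹` norm at most `‖x - y‖₁ / R`,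
and `R ≥ min ξ`. Summing over the rows and using `ℓ² ≤ ℓ¹` gives the bound.
-/

open Finset

theorem Real.sqrt_sum_sq_le_sum_abs {ι : Type*} (s : Finset ι) (f : ι → ℝ) :
    √(∑ i ∈ s, f i ^ 2) ≤ ∑ i ∈ s, |f i| := by
  rw [Real.sqrt_le_left (sum_nonneg fun i _ => abs_nonneg (f i))]
  simpa only [sq_abs] using sum_sq_le_sq_sum_of_nonneg fun i _ => abs_nonneg (f i)

theorem abs_sum_sub_sum_le_sum_abs_sub {ι : Type*} (s : Finset ι) (x y : ι → ℝ) :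
    |∑ i ∈ s, y i - ∑ i ∈ s, x i| ≤ ∑ i ∈ s, |x i - y i| := by
  rw [← sum_sub_distrib]
  exact (abs_sum_le_sum_abs _ _).trans_eq (sum_congr rfl fun i _ => abs_sub_comm _ _)

theorem sum_abs_div_sum_sub_div_sum_le {ι : Type*} [Fintype ι] (x y : ι → ℝ)
    (hx : 0 < ∑ i, x i) (hy : 0 < ∑ i, y i) (hy_nonneg : ∀ i, 0 ≤ y i) :
    ∑ i, |x i / ∑ j, x j - y i / ∑ j, y j| ≤ 2 / (∑ i, x i) * ∑ i, |x i - y i| := by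
  set R := ∑ j, x j
  set R' := ∑ j, y j
  set D := ∑ i, |x i - y i|
  have hdiff : |R' - R| ≤ D := abs_sum_sub_sum_le_sum_abs_sub univ x y
  have hsplit : ∀ i, x i / R - y i / R' = (x i - y i) / R + y i / R' * ((R' - R) / R) := by
    intro i
    field_simp
    ring
  calc ∑ i, |x i / R - y i / R'|
      ≤ ∑ i, (|x i - y i| / R + y i / R' * (|R' - R| / R)) := by
        refine sum_le_sum fun i _ => ?_
        rw [hsplit]
        refine (abs_add_le _ _).trans_eq ?_
        rw [abs_div, abs_mul, abs_div, abs_div, abs_of_pos hx, abs_of_pos hy,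
          abs_of_nonneg (hy_nonneg i)]
    _ = D / R + |R' - R| / R := by
        rw [sum_add_distrib, ← sum_div, ← sum_mul, ← sum_div, div_self hy.ne', one_mul]
    _ ≤ D / R + D / R := by gcongr
    _ = 2 / R * D := by ring

theorem row_normalization_lipschitz_general
    {S A : Type*} [Fintype S] [Fintype A] [Nonempty S]
    (ξ : S → ℝ) (hξ : ∀ s, 0 < ξ s)
    (lam lam' : S → A → ℝ)
    (hnn' : ∀ s a, 0 ≤ lam' s a)
    (hrow : ∀ s, ξ s ≤ ∑ a, lam s a) (hrow' : ∀ s, ξ s ≤ ∑ a, lam' s a) :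
    Real.sqrt (∑ s, ∑ a,
        (lam s a / ∑ a', lam s a' - lam' s a / ∑ a', lam' s a')^2)
      ≤ (2 / (Finset.univ.inf' Finset.univ_nonempty ξ)) *
        ∑ s, ∑ a, |lam s a - lam' s a| := by
  set m := univ.inf' univ_nonempty ξ
  have hm : 0 < m := (lt_inf'_iff _).2 fun s _ => hξ s
  have hm_le : ∀ s, m ≤ ∑ a, lam s a := fun s => (inf'_le ξ (mem_univ s)).trans (hrow s)
  have hrow_bound : ∀ s, ∑ a, |lam s a / ∑ a', lam s a' - lam' s a / ∑ a', lam' s a'|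
      ≤ 2 / m * ∑ a, |lam s a - lam' s a| := fun s =>
    (sum_abs_div_sum_sub_div_sum_le (lam s) (lam' s) ((hξ s).trans_le (hrow s))
      ((hξ s).trans_le (hrow' s)) (hnn' s)).trans <| by
        gcongr
        exact hm_le s
  calc _ ≤ ∑ s, ∑ a, |lam s a / ∑ a', lam s a' - lam' s a / ∑ a', lam' s a'| := by
        simpa only [Fintype.sum_prod_type] using
          Real.sqrt_sum_sq_le_sum_abs univ
            fun p : S × A => lam p.1 p.2 / ∑ a', lam p.1 a' - lam' p.1 p.2 / ∑ a', lam' p.1 a'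
    _ ≤ ∑ s, 2 / m * ∑ a, |lam s a - lam' s a| := sum_le_sum fun s _ => hrow_bound s
    _ = _ := (mul_sum _ _ _).symm

/-- Lipschitz bound for the row-normalization map Π. -/
theorem row_normalization_lipschitz
    {S A : Type*} [Fintype S] [Fintype A] [Nonempty S]
    (ξ : S → ℝ) (hξ : ∀ s, 0 < ξ s)
    (lam lam' : S → A → ℝ)
    (hnn : ∀ s a, 0 ≤ lam s a) (hnn' : ∀ s a, 0 ≤ lam' s a)
    (hrow : ∀ s, ξ s ≤ ∑ a, lam s a) (hrow' : ∀ s, ξ s ≤ ∑ a, lam' s a) :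
    Real.sqrt (∑ s, ∑ a,
        (lam s a / ∑ a', lam s a' - lam' s a / ∑ a', lam' s a')^2)
      ≤ (2 / (Finset.univ.inf' Finset.univ_nonempty ξ)) *
        ∑ s, ∑ a, |lam s a - lam' s a| :=
  row_normalization_lipschitz_general ξ hξ lam lam' hnn' hrow hrow'
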